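/- For every connected graph G on n vertices, μ_α(G) ≥ n−1, with equality if and only if G is the complete graph K_n. -/

import Mathlib

open Finset Matrix

namespace DistAlpha

variable {V : Type*} [Fintype V] [DecidableEq V]

/-- The distance matrix of a graph, with real entries. -/
noncomputable def distMatrix (G : SimpleGraph V) : Matrix V V ℝ :=
  fun u v => (G.dist u v : ℝ)

/-- The transmission of a vertex: the sum of distances to all vertices. -/
noncomputable def transmission (G : SimpleGraph V) (u : V) : ℝ :=
  ∑ v, (G.dist u v : ℝ)

/-- The matrix `D_α = α T + (1-α) D`. -/
noncomputable def Dalpha (G : SimpleGraph V) (α : ℝ) : Matrix V V ℝ :=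
  α • Matrix.diagonal (transmission G) + (1 - α) • distMatrix G

/-- The distance α-spectral radius: the largest (real) eigenvalue of `D_α`. -/
noncomputable def muAlpha (G : SimpleGraph V) (α : ℝ) : ℝ :=
  sSup (spectrum ℝ (Dalpha G α))

/-- The transmission of a graph: sum of distances over unordered pairs. -/
noncomputable def sigma (G : SimpleGraph V) : ℝ :=
  (∑ u, ∑ v, (G.dist u v : ℝ)) / 2

/-- A graph is transmission regular if all vertex transmissions are equal. -/
def TransmissionRegular (G : SimpleGraph V) : Prop :=
  ∀ u v : V, transmission G u = transmission G v

lemma rayleigh_le {A : Matrix V V ℝ} (hA : A.IsHermitian) [Nonempty V] (x : V → ℝ) :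
    x ⬝ᵥ A *ᵥ x ≤ sSup (spectrum ℝ A) * (x ⬝ᵥ x) := by
  set c : ℝ := Finset.univ.sup' Finset.univ_nonempty hA.eigenvalues with hc
  have hcmem : c ∈ spectrum ℝ A := by
    obtain ⟨i, -, hi⟩ := Finset.exists_mem_eq_sup' Finset.univ_nonempty hA.eigenvalues
    rw [hc, hi]; exact hA.eigenvalues_mem_spectrum_real i
  have hcle : c ≤ sSup (spectrum ℝ A) :=
    le_csSup (Matrix.finite_spectrum A).bddAbove hcmem
  set U : Matrix V V ℝ := (hA.eigenvectorUnitary : Matrix V V ℝ) with hU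
  have hUU : U * star U = 1 := Matrix.mem_unitaryGroup_iff.mp hA.eigenvectorUnitary.2
  have hdiag : c • (1 : Matrix V V ℝ) - A
      = U * Matrix.diagonal (fun i => c - hA.eigenvalues i) * star U := by
    have hsp := hA.spectral_theorem
    have hofReal : (RCLike.ofReal ∘ hA.eigenvalues : V → ℝ) = hA.eigenvalues := by
      funext i; simp
    rw [hofReal, Unitary.conjStarAlgAut_apply, ← hU] at hsp
    have h1 : Matrix.diagonal (fun i => c - hA.eigenvalues i)
        = c • (1 : Matrix V V ℝ) - Matrix.diagonal hA.eigenvalues := by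
      ext i j
      by_cases h : i = j <;> simp [Matrix.diagonal_apply, Matrix.one_apply, h]
    rw [h1, Matrix.mul_sub, Matrix.sub_mul, ← hsp]
    congr 1
    rw [mul_smul_comm, smul_mul_assoc, Matrix.mul_one, hUU]
  have hPSD : (c • (1 : Matrix V V ℝ) - A).PosSemidef := by
    rw [hdiag, Matrix.star_eq_conjTranspose]
    exact (Matrix.posSemidef_diagonal_iff.mpr
      (fun i => sub_nonneg.mpr (Finset.le_sup' _ (Finset.mem_univ i)))).mul_mul_conjTranspose_same U
  have h0 := (Matrix.posSemidef_iff_dotProduct_mulVec.mp hPSD).2 x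
  have hsx : star x = x := by funext i; simp
  rw [hsx, Matrix.sub_mulVec, Matrix.smul_mulVec, Matrix.one_mulVec,
    dotProduct_sub, dotProduct_smul] at h0
  have hxx : 0 ≤ x ⬝ᵥ x := by
    simp only [dotProduct]
    exact Finset.sum_nonneg fun i _ => mul_self_nonneg _
  have : x ⬝ᵥ A *ᵥ x ≤ c * (x ⬝ᵥ x) := by
    simpa [smul_eq_mul] using sub_nonneg.mp h0
  exact this.trans (mul_le_mul_of_nonneg_right hcle hxx)


lemma dalpha_isHermitian (G : SimpleGraph V) (α : ℝ) : (Dalpha G α).IsHermitian := by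
  unfold Matrix.IsHermitian
  ext i j
  rcases eq_or_ne i j with h | h
  · subst h; simp [Dalpha, Matrix.conjTranspose_apply]
  · simp only [Dalpha, Matrix.conjTranspose_apply, Matrix.add_apply, Matrix.smul_apply,
      distMatrix, Matrix.diagonal_apply, if_neg h, if_neg (Ne.symm h), star_trivial,
      smul_zero, zero_add, smul_eq_mul]
    rw [SimpleGraph.dist_comm]

lemma ite_sum_eq (u : V) : ∑ v, (if u = v then (0:ℝ) else 1) = (Fintype.card V : ℝ) - 1 := by
  have h : ∀ v, (if u = v then (0:ℝ) else 1) = 1 - (if u = v then 1 else 0) := by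
    intro v; split <;> ring
  simp only [h, Finset.sum_sub_distrib, Finset.sum_const, Finset.card_univ, nsmul_eq_mul, mul_one,
    Finset.sum_ite_eq, Finset.mem_univ, if_pos]

lemma row_sum (G : SimpleGraph V) (α : ℝ) (u : V) :
    ∑ v, Dalpha G α u v = transmission G u := by
  have h1 : ∑ v, (α • Matrix.diagonal (transmission G)) u v = α * transmission G u := by
    simp [Matrix.diagonal_apply, Finset.sum_ite_eq, mul_ite]
  have h2 : ∑ v, ((1 - α) • distMatrix G) u v = (1 - α) * transmission G u := by
    simp [distMatrix, transmission, Finset.mul_sum]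
  simp only [Dalpha, Matrix.add_apply, Finset.sum_add_distrib, h1, h2]
  ring

lemma quad_ones (G : SimpleGraph V) (α : ℝ) :
    (fun _ => (1:ℝ)) ⬝ᵥ (Dalpha G α *ᵥ fun _ => (1:ℝ)) = ∑ u, transmission G u := by
  simp only [Matrix.mulVec, dotProduct, one_mul, mul_one]
  exact Finset.sum_congr rfl fun u _ => row_sum G α u

lemma transmission_ge (G : SimpleGraph V) (hG : G.Connected) (u : V) :
    (Fintype.card V : ℝ) - 1 ≤ transmission G u := by
  rw [← ite_sum_eq u]
  refine Finset.sum_le_sum fun v _ => ?_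
  rcases eq_or_ne u v with h | h
  · subst h; simp
  · simp only [if_neg h]
    exact_mod_cast Nat.one_le_cast.mpr (hG.pos_dist_of_ne h)

/-- `μ_α(G) ≥ n - 1`, with equality iff `G` is complete. -/
theorem muAlpha_ge_card_sub_one (G : SimpleGraph V) (hG : G.Connected)
    (α : ℝ) (hα0 : 0 ≤ α) (hα1 : α < 1) :
    muAlpha G α ≥ (Fintype.card V : ℝ) - 1 ∧
      (muAlpha G α = (Fintype.card V : ℝ) - 1 ↔ G = ⊤) := by
  have hne : Nonempty V := hG.nonempty
  have hn1 : 1 ≤ Fintype.card V := Fintype.card_pos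
  set n : ℝ := (Fintype.card V : ℝ) with hn
  have hnpos : 0 < n := by rw [hn]; exact_mod_cast (Fintype.card_pos : 0 < Fintype.card V)
  have hA := dalpha_isHermitian G α
  -- key Rayleigh inequality
  have hray := rayleigh_le hA (fun _ => (1:ℝ))
  have hxx : ((fun _ => (1:ℝ)) : V → ℝ) ⬝ᵥ ((fun _ => (1:ℝ)) : V → ℝ) = n := by
    simp [dotProduct, Finset.card_univ, hn]
  rw [quad_ones G α, hxx] at hray
  change ∑ u, transmission G u ≤ muAlpha G α * n at hray
  -- lower bound
  have hS : n * (n - 1) ≤ ∑ u, transmission G u := by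
    calc n * (n - 1) = ∑ _u : V, (n - 1) := by
          simp [Finset.sum_const, Finset.card_univ, mul_comm]; rw [← hn]; ring
      _ ≤ ∑ u, transmission G u := Finset.sum_le_sum fun u _ => transmission_ge G hG u
  have hge : n - 1 ≤ muAlpha G α := by
    have := hS.trans hray
    nlinarith
  refine ⟨hge, ?_, ?_⟩
  · -- equality → complete
    intro heq
    by_contra hNT
    have hexists : ∃ u v, u ≠ v ∧ ¬ G.Adj u v := by
      by_contra hcon
      push_neg at hcon
      apply hNT
      ext u v
      rw [SimpleGraph.top_adj]
      exact ⟨SimpleGraph.Adj.ne, fun h => hcon u v h⟩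
    obtain ⟨u, v, huv, hnadj⟩ := hexists
    have h2 : 2 ≤ G.dist u v := by
      have h1' : 0 < G.dist u v := hG.pos_dist_of_ne huv
      have hne1 : G.dist u v ≠ 1 := fun h => hnadj (SimpleGraph.dist_eq_one_iff_adj.mp h)
      omega
    -- strict transmission at u
    have htu : n - 1 < transmission G u := by
      rw [← ite_sum_eq u]
      refine Finset.sum_lt_sum (fun w _ => ?_) ⟨v, Finset.mem_univ v, ?_⟩
      · rcases eq_or_ne u w with h | h
        · subst h; simp
        · simp only [if_neg h]
          exact_mod_cast Nat.one_le_cast.mpr (hG.pos_dist_of_ne h)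
      · simp only [if_neg huv]
        have : (2:ℝ) ≤ (G.dist u v : ℝ) := by exact_mod_cast h2
        linarith
    have hSs : n * (n - 1) < ∑ w, transmission G w := by
      calc n * (n - 1) = ∑ _w : V, (n - 1) := by
            simp [Finset.sum_const, Finset.card_univ, mul_comm]; rw [← hn]; ring
        _ < ∑ w, transmission G w :=
            Finset.sum_lt_sum (fun w _ => transmission_ge G hG w) ⟨u, Finset.mem_univ u, htu⟩
    have : n - 1 < muAlpha G α := by
      have := hSs.trans_le hray
      nlinarith
    linarith [heq]
  · -- complete → equality
    intro hGtop
    subst hGtop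
    refine le_antisymm ?_ hge
    -- Gershgorin upper bound
    have hbound : ∀ μ ∈ spectrum ℝ (Dalpha (⊤ : SimpleGraph V) α), μ ≤ n - 1 := by
      intro μ hμ
      have hμ' : Module.End.HasEigenvalue (Matrix.toLin' (Dalpha (⊤ : SimpleGraph V) α)) μ := by
        rw [Module.End.hasEigenvalue_iff_mem_spectrum]
        have heq2 : spectrum ℝ (Matrix.toLin' (Dalpha (⊤ : SimpleGraph V) α))
            = spectrum ℝ (Dalpha (⊤ : SimpleGraph V) α) := by
          have := AlgEquiv.spectrum_eq (Matrix.toLinAlgEquiv' (R := ℝ) (n := V))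
            (Dalpha (⊤ : SimpleGraph V) α)
          exact this
        rw [heq2]; exact hμ
      obtain ⟨k, hk⟩ := eigenvalue_mem_ball hμ'
      rw [Metric.mem_closedBall, Real.dist_eq, abs_le] at hk
      have hdk : Dalpha (⊤ : SimpleGraph V) α k k = α * (n - 1) := by
        have htk : transmission (⊤ : SimpleGraph V) k = n - 1 := by
          unfold transmission
          rw [← ite_sum_eq k]
          refine Finset.sum_congr rfl fun w _ => ?_
          rw [SimpleGraph.dist_top]
          split <;> simp
        simp [Dalpha, distMatrix, Matrix.diagonal_apply, htk, SimpleGraph.dist_self]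
      have hsum : ∑ j ∈ Finset.univ.erase k, ‖Dalpha (⊤ : SimpleGraph V) α k j‖
          = (n - 1) * (1 - α) := by
        have hentry : ∀ j ∈ Finset.univ.erase k, ‖Dalpha (⊤ : SimpleGraph V) α k j‖ = 1 - α := by
          intro j hj
          have hkj : k ≠ j := (Finset.ne_of_mem_erase hj).symm
          have : Dalpha (⊤ : SimpleGraph V) α k j = 1 - α := by
            simp [Dalpha, distMatrix, Matrix.diagonal_apply, hkj,
              SimpleGraph.dist_top_of_ne hkj]
          rw [this, Real.norm_eq_abs, abs_of_nonneg (by linarith)]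
        rw [Finset.sum_congr rfl hentry, Finset.sum_const,
          Finset.card_erase_of_mem (Finset.mem_univ k), Finset.card_univ, nsmul_eq_mul]
        have : ((Fintype.card V - 1 : ℕ) : ℝ) = n - 1 := by
          push_cast [Nat.cast_sub hn1]; ring
        rw [this]
      have := hk.2
      rw [hdk, hsum] at this
      nlinarith
    have h1n : (1:ℝ) ≤ n := by rw [hn]; exact_mod_cast hn1
    exact Real.sSup_le hbound (by linarith : (0:ℝ) ≤ n - 1)

end DistAlpha
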